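/- arXiv:2101.05265 — 3 statements merged into one kernel-verified Lean document; each statement's English description precedes it below -/
import Mathlib

section
/- Let S be a finite state space, π a fixed policy with transition kernel P^π : S → Dist(S), and Dist a bounded pseudometric on policy outputs, and let 0 ≤ γ < 1. Then the operator F defined on bounded pseudometrics d over S by F(d)(x,y) = Dist(π(x), π(y)) + γ · W₁(d)(P^π(·|x), P^π(·|y)) is a γ-contraction in the sup norm, i.e., ‖F(d) − F(d')‖_∞ ≤ γ ‖d − d'‖_∞. -/
open scoped BigOperators

noncomputable section

/-- A probability distribution on a finite type, as a nonnegative function summing to 1. -/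
def IsProbDist {S : Type*} [Fintype S] (P : S → ℝ) : Prop :=
  (∀ x, 0 ≤ P x) ∧ ∑ x, P x = 1

/-- A coupling of two distributions on finite types. -/
def IsCoupling {S T : Type*} [Fintype S] [Fintype T]
    (Γ : S → T → ℝ) (P : S → ℝ) (Q : T → ℝ) : Prop :=
  (∀ x y, 0 ≤ Γ x y) ∧ (∀ x, ∑ y, Γ x y = P x) ∧ (∀ y, ∑ x, Γ x y = Q y)

/-- 1-Wasserstein distance: minimal transport cost over couplings. -/
def W1 {S T : Type*} [Fintype S] [Fintype T]
    (d : S → T → ℝ) (P : S → ℝ) (Q : T → ℝ) : ℝ :=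
  sInf {c | ∃ Γ, IsCoupling Γ P Q ∧ c = ∑ x, ∑ y, Γ x y * d x y}

/-- A pseudometric: nonnegative, vanishing on the diagonal, symmetric, triangle inequality. -/
def IsPseudometric {S : Type*} (d : S → S → ℝ) : Prop :=
  (∀ x y, 0 ≤ d x y) ∧ (∀ x, d x x = 0) ∧ (∀ x y, d x y = d y x) ∧
    (∀ x y z, d x z ≤ d x y + d y z)

/-- Sup norm distance between two functions on a product of finite types. -/
def supDist {S T : Type*} [Fintype S] [Fintype T] (d d' : S → T → ℝ) : ℝ :=
  ⨆ p : S × T, |d p.1 p.2 - d' p.1 p.2|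

/-- Total variation distance between distributions on a finite action set. -/
def tv {A : Type*} [Fintype A] (p q : A → ℝ) : ℝ := (∑ a, |p a - q a|) / 2

lemma prod_coupling {S T : Type*} [Fintype S] [Fintype T] {P : S → ℝ} {Q : T → ℝ}
    (hP : IsProbDist P) (hQ : IsProbDist Q) :
    IsCoupling (fun x y => P x * Q y) P Q := by
  refine ⟨fun x y => mul_nonneg (hP.1 x) (hQ.1 y), fun x => ?_, fun y => ?_⟩
  · rw [← Finset.mul_sum, hQ.2, mul_one]
  · rw [← Finset.sum_mul, hP.2, one_mul]

lemma abs_le_supDist {S T : Type*} [Fintype S] [Fintype T] (d d' : S → T → ℝ) (x : S) (y : T) :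
    |d x y - d' x y| ≤ supDist d d' := by
  unfold supDist
  exact le_ciSup (f := fun p : S × T => |d p.1 p.2 - d' p.1 p.2|)
    (Set.Finite.bddAbove (Set.finite_range _)) ⟨x, y⟩

lemma W1_le_W1_add {S : Type*} [Fintype S]
    (d d' : S → S → ℝ) (hd : ∀ x y, 0 ≤ d x y)
    {P Q : S → ℝ} (hP : IsProbDist P) (hQ : IsProbDist Q) :
    W1 d P Q ≤ W1 d' P Q + supDist d d' := by
  set K := supDist d d' with hKdef
  have hbdd : BddBelow {c | ∃ Γ, IsCoupling Γ P Q ∧ c = ∑ x, ∑ y, Γ x y * d x y} := by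
    refine ⟨0, fun c hc => ?_⟩
    obtain ⟨Γ, hΓ, rfl⟩ := hc
    exact Finset.sum_nonneg fun x _ => Finset.sum_nonneg fun y _ =>
      mul_nonneg (hΓ.1 x y) (hd x y)
  have hne : {c | ∃ Γ, IsCoupling Γ P Q ∧ c = ∑ x, ∑ y, Γ x y * d' x y}.Nonempty :=
    ⟨_, _, prod_coupling hP hQ, rfl⟩
  have key : W1 d P Q - K ≤ W1 d' P Q := by
    rw [W1]
    refine le_csInf hne fun c hc => ?_
    obtain ⟨Γ, hΓ, rfl⟩ := hc
    have hΓsum : ∑ x, ∑ y, Γ x y = 1 := by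
      rw [Finset.sum_congr rfl fun x _ => hΓ.2.1 x, hP.2]
    have h1 : W1 d P Q ≤ ∑ x, ∑ y, Γ x y * d x y := csInf_le hbdd ⟨Γ, hΓ, rfl⟩
    have h2 : ∑ x, ∑ y, Γ x y * d x y ≤ (∑ x, ∑ y, Γ x y * d' x y) + K := by
      have : ∑ x, ∑ y, Γ x y * d x y ≤ ∑ x, ∑ y, Γ x y * (d' x y + K) := by
        refine Finset.sum_le_sum fun x _ => Finset.sum_le_sum fun y _ => ?_
        refine mul_le_mul_of_nonneg_left ?_ (hΓ.1 x y)
        have := abs_le_supDist d d' x y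
        have := abs_le.mp this
        linarith [this.2]
      calc ∑ x, ∑ y, Γ x y * d x y ≤ ∑ x, ∑ y, Γ x y * (d' x y + K) := this
        _ = (∑ x, ∑ y, Γ x y * d' x y) + (∑ x, ∑ y, Γ x y) * K := by
            rw [Finset.sum_mul]
            rw [← Finset.sum_add_distrib]
            refine Finset.sum_congr rfl fun x _ => ?_
            rw [Finset.sum_mul, ← Finset.sum_add_distrib]
            exact Finset.sum_congr rfl fun y _ => by ring
        _ = (∑ x, ∑ y, Γ x y * d' x y) + K := by rw [hΓsum, one_mul]
    rw [W1] at h1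
    linarith
  linarith

lemma abs_W1_sub_le {S : Type*} [Fintype S]
    (d d' : S → S → ℝ) (hd : ∀ x y, 0 ≤ d x y) (hd' : ∀ x y, 0 ≤ d' x y)
    {P Q : S → ℝ} (hP : IsProbDist P) (hQ : IsProbDist Q) :
    |W1 d P Q - W1 d' P Q| ≤ supDist d d' := by
  rw [abs_sub_le_iff]
  constructor
  · linarith [W1_le_W1_add d d' hd hP hQ]
  · have h := W1_le_W1_add d' d hd' hP hQ
    have : supDist d' d = supDist d d' := by
      unfold supDist
      exact iSup_congr fun p => abs_sub_comm _ _
    linarith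

/-- The policy similarity operator is a γ-contraction in sup norm. -/
theorem psm_operator_contraction {S A : Type*} [Fintype S] [Nonempty S] [Fintype A]
    (γ : ℝ) (hγ0 : 0 ≤ γ) (hγ1 : γ < 1)
    (π : S → A → ℝ) (hπ : ∀ x, IsProbDist (π x))
    (Pk : S → S → ℝ) (hPk : ∀ x, IsProbDist (Pk x))
    (Dist : (A → ℝ) → (A → ℝ) → ℝ) (hDist : IsPseudometric Dist)
    (C : ℝ) (hC : ∀ p q, Dist p q ≤ C)
    (d d' : S → S → ℝ) (hd : IsPseudometric d) (hd' : IsPseudometric d') :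
    supDist (fun x y => Dist (π x) (π y) + γ * W1 d (Pk x) (Pk y))
        (fun x y => Dist (π x) (π y) + γ * W1 d' (Pk x) (Pk y)) ≤
      γ * supDist d d' := by
  unfold supDist
  refine ciSup_le fun p => ?_
  obtain ⟨x, y⟩ := p
  simp only
  have : Dist (π x) (π y) + γ * W1 d (Pk x) (Pk y) -
      (Dist (π x) (π y) + γ * W1 d' (Pk x) (Pk y)) =
      γ * (W1 d (Pk x) (Pk y) - W1 d' (Pk x) (Pk y)) := by ring
  rw [this, abs_mul, abs_of_nonneg hγ0]
  exact mul_le_mul_of_nonneg_left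
    (abs_W1_sub_le d d' hd.1 hd'.1 (hPk x) (hPk y)) hγ0
end
end

section
/- Let S be a finite state space, π a fixed policy, Dist a bounded pseudometric on policies, and 0 ≤ γ < 1. Then there exists a unique bounded function d* : S × S → ℝ satisfying d*(x,y) = Dist(π(x), π(y)) + γ · W₁(d*)(P^π(·|x), P^π(·|y)) for all x, y ∈ S (the policy similarity metric). -/
open scoped BigOperators

noncomputable section

section aux
variable {S T : Type*} [Fintype S] [Fintype T] {P : S → ℝ} {Q : T → ℝ}

lemma coupling_total {Γ : S → T → ℝ} (hΓ : IsCoupling Γ P Q) (hP : IsProbDist P) :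
    ∑ x, ∑ y, Γ x y = 1 := by
  simp only [hΓ.2.1]; exact hP.2

lemma w1_set_nonempty (hP : IsProbDist P) (hQ : IsProbDist Q) (d : S → T → ℝ) :
    {c | ∃ Γ, IsCoupling Γ P Q ∧ c = ∑ x, ∑ y, Γ x y * d x y}.Nonempty := by
  refine ⟨_, fun x y => P x * Q y, ⟨fun x y => mul_nonneg (hP.1 x) (hQ.1 y), ?_, ?_⟩, rfl⟩
  · intro x; rw [← Finset.mul_sum, hQ.2, mul_one]
  · intro y; rw [← Finset.sum_mul, hP.2, one_mul]

lemma w1_bddBelow (hP : IsProbDist P) (d : S → T → ℝ) :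
    BddBelow {c | ∃ Γ, IsCoupling Γ P Q ∧ c = ∑ x, ∑ y, Γ x y * d x y} := by
  obtain ⟨M, hM⟩ := Finite.exists_le (fun p : S × T => |d p.1 p.2|)
  refine ⟨-M, ?_⟩
  rintro c ⟨Γ, hΓ, rfl⟩
  have htot : ∑ x, ∑ y, Γ x y = 1 := coupling_total hΓ hP
  have h1 : ∑ x, ∑ y, Γ x y * (-M) ≤ ∑ x, ∑ y, Γ x y * d x y := by
    refine Finset.sum_le_sum fun x _ => Finset.sum_le_sum fun y _ => ?_
    exact mul_le_mul_of_nonneg_left ((abs_le.mp (hM (x, y))).1) (hΓ.1 x y)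
  have h2 : ∑ x, ∑ y, Γ x y * (-M) = -M := by
    simp only [← Finset.sum_mul]; rw [htot, one_mul]
  linarith

lemma cost_diff_le {Γ : S → T → ℝ} (hΓ : IsCoupling Γ P Q) (hP : IsProbDist P)
    {d d' : S → T → ℝ} {ε : ℝ} (h : ∀ x y, |d x y - d' x y| ≤ ε) :
    ∑ x, ∑ y, Γ x y * d x y ≤ (∑ x, ∑ y, Γ x y * d' x y) + ε := by
  have htot : ∑ x, ∑ y, Γ x y = 1 := coupling_total hΓ hP
  have h1 : ∀ x y, Γ x y * d x y ≤ Γ x y * d' x y + Γ x y * ε := by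
    intro x y
    have := mul_le_mul_of_nonneg_left (abs_le.mp (h x y)).2 (hΓ.1 x y)
    nlinarith [hΓ.1 x y]
  have h2 : ∑ x, ∑ y, Γ x y * d x y ≤ ∑ x, ∑ y, (Γ x y * d' x y + Γ x y * ε) :=
    Finset.sum_le_sum fun x _ => Finset.sum_le_sum fun y _ => h1 x y
  have h3 : ∑ x, ∑ y, (Γ x y * d' x y + Γ x y * ε)
      = (∑ x, ∑ y, Γ x y * d' x y) + ε := by
    simp only [Finset.sum_add_distrib, ← Finset.sum_mul]
    rw [htot, one_mul]
  linarith

lemma w1_le_w1_add (hP : IsProbDist P) (hQ : IsProbDist Q)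
    {d d' : S → T → ℝ} {ε : ℝ} (h : ∀ x y, |d x y - d' x y| ≤ ε) :
    W1 d P Q ≤ W1 d' P Q + ε := by
  rw [W1, W1, ← sub_le_iff_le_add]
  refine le_csInf (w1_set_nonempty hP hQ d') ?_
  rintro c ⟨Γ, hΓ, rfl⟩
  rw [sub_le_iff_le_add]
  calc sInf {c | ∃ Γ, IsCoupling Γ P Q ∧ c = ∑ x, ∑ y, Γ x y * d x y}
      ≤ ∑ x, ∑ y, Γ x y * d x y := csInf_le (w1_bddBelow hP d) ⟨Γ, hΓ, rfl⟩
    _ ≤ (∑ x, ∑ y, Γ x y * d' x y) + ε := cost_diff_le hΓ hP h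

lemma abs_w1_sub_le (hP : IsProbDist P) (hQ : IsProbDist Q)
    {d d' : S → T → ℝ} {ε : ℝ} (h : ∀ x y, |d x y - d' x y| ≤ ε) :
    |W1 d P Q - W1 d' P Q| ≤ ε := by
  rw [abs_sub_le_iff]
  constructor
  · have := w1_le_w1_add hP hQ h; linarith
  · have := w1_le_w1_add hP hQ (d := d') (d' := d) (fun x y => by rw [abs_sub_comm]; exact h x y)
    linarith

end aux

/-- Existence and uniqueness of the policy similarity metric. -/
theorem psm_exists_unique {S A : Type*} [Fintype S] [Nonempty S] [Fintype A]
    (γ : ℝ) (hγ0 : 0 ≤ γ) (hγ1 : γ < 1)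
    (π : S → A → ℝ) (hπ : ∀ x, IsProbDist (π x))
    (Pk : S → S → ℝ) (hPk : ∀ x, IsProbDist (Pk x))
    (Dist : (A → ℝ) → (A → ℝ) → ℝ) (hDist : IsPseudometric Dist)
    (C : ℝ) (hC : ∀ p q, Dist p q ≤ C) :
    ∃! d : S → S → ℝ, ∀ x y,
      d x y = Dist (π x) (π y) + γ * W1 d (Pk x) (Pk y) := by
  set F : (S → S → ℝ) → (S → S → ℝ) :=
    fun d x y => Dist (π x) (π y) + γ * W1 d (Pk x) (Pk y) with hF
  -- pointwise bound by sup distance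
  have hpt : ∀ (d d' : S → S → ℝ) (x y : S), |d x y - d' x y| ≤ dist d d' := by
    intro d d' x y
    calc |d x y - d' x y| = dist (d x y) (d' x y) := (Real.dist_eq _ _).symm
      _ ≤ dist (d x) (d' x) := dist_le_pi_dist (d x) (d' x) y
      _ ≤ dist d d' := dist_le_pi_dist d d' x
  have hlip : ∀ d d' : S → S → ℝ, dist (F d) (F d') ≤ γ * dist d d' := by
    intro d d'
    have hnn : 0 ≤ γ * dist d d' := mul_nonneg hγ0 dist_nonneg
    rw [dist_pi_le_iff hnn]
    intro x
    rw [dist_pi_le_iff hnn]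
    intro y
    have hw : |W1 d (Pk x) (Pk y) - W1 d' (Pk x) (Pk y)| ≤ dist d d' :=
      abs_w1_sub_le (hPk x) (hPk y) (hpt d d')
    have : dist (F d x y) (F d' x y)
        = γ * |W1 d (Pk x) (Pk y) - W1 d' (Pk x) (Pk y)| := by
      rw [Real.dist_eq, hF]
      simp only
      rw [add_sub_add_left_eq_sub, ← mul_sub, abs_mul, abs_of_nonneg hγ0]
    rw [this]
    exact mul_le_mul_of_nonneg_left hw hγ0
  have hK : LipschitzWith ⟨γ, hγ0⟩ F := LipschitzWith.of_dist_le_mul fun d d' => hlip d d'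
  have hcon : ContractingWith ⟨γ, hγ0⟩ F := ⟨by exact_mod_cast hγ1, hK⟩
  refine ⟨hcon.fixedPoint F, ?_, ?_⟩
  · intro x y
    conv_lhs => rw [← hcon.fixedPoint_isFixedPt]
  · intro d hd
    have hfix : F d = d := by
      funext x y
      exact (hd x y).symm
    have h1 : dist d (hcon.fixedPoint F) ≤ γ * dist d (hcon.fixedPoint F) := by
      calc dist d (hcon.fixedPoint F)
          = dist (F d) (F (hcon.fixedPoint F)) := by
            rw [hfix, hcon.fixedPoint_isFixedPt]
        _ ≤ γ * dist d (hcon.fixedPoint F) := hlip _ _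
    have h0 : dist d (hcon.fixedPoint F) ≤ 0 := by nlinarith [dist_nonneg (x := d) (y := hcon.fixedPoint F)]
    exact dist_le_zero.mp h0
end
end

section
/- (Policy transfer bound) Let X and Y be disjoint finite state spaces with optimal policies π*_X and π*_Y contained in a union MDP with optimal policy π*, let d* be the policy similarity metric with Dist = total variation, and for each y ∈ Y let x̃_y ∈ X minimize d*(x, y) over x ∈ X. Define the transferred policy π̃(y) = π*_X(x̃_y) for y ∈ Y. Then for any y ∈ Y, the expected discounted sum E[Σ_{t≥0} γ^t · TV(π̃(Y^t_y), π*(Y^t_y))], where Y^0_y = y and Y^{t+1}_y ∼ P^{π̃}(·|Y^t_y), is at most ((1+γ)/(1−γ)) · d*(x̃_y, y). -/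
open scoped BigOperators

noncomputable section

lemma tv_nonneg' {A : Type*} [Fintype A] (p q : A → ℝ) : 0 ≤ tv p q := by
  unfold tv
  positivity

lemma tv_le_one' {A : Type*} [Fintype A] {p q : A → ℝ}
    (hp : IsProbDist p) (hq : IsProbDist q) : tv p q ≤ 1 := by
  unfold tv
  rw [div_le_one (by norm_num : (0:ℝ) < 2)]
  calc ∑ a, |p a - q a| ≤ ∑ a, (p a + q a) := by
        refine Finset.sum_le_sum fun a _ => ?_
        have := hp.1 a; have := hq.1 a
        rw [abs_sub_le_iff]; constructor <;> linarith
    _ = 2 := by rw [Finset.sum_add_distrib, hp.2, hq.2]; ring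

lemma le_W1_of_le {S T : Type*} [Fintype S] [Fintype T]
    {d : S → T → ℝ} {P : S → ℝ} {Q : T → ℝ} (hP : IsProbDist P) (hQ : IsProbDist Q)
    (φ : T → ℝ) (hφ : ∀ x y, φ y ≤ d x y) :
    ∑ y, Q y * φ y ≤ W1 d P Q := by
  refine le_csInf ⟨_, fun x y => P x * Q y, prod_coupling hP hQ, rfl⟩ ?_
  rintro c ⟨Γ, ⟨hΓnn, hrow, hcol⟩, rfl⟩
  calc ∑ y, Q y * φ y = ∑ y, (∑ x, Γ x y) * φ y := by
        refine Finset.sum_congr rfl fun y _ => by rw [hcol]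
    _ = ∑ x, ∑ y, Γ x y * φ y := by
        rw [Finset.sum_comm]
        exact Finset.sum_congr rfl fun y _ => by rw [Finset.sum_mul]
    _ ≤ ∑ x, ∑ y, Γ x y * d x y := by
        refine Finset.sum_le_sum fun x _ => Finset.sum_le_sum fun y _ =>
          mul_le_mul_of_nonneg_left (hφ x y) (hΓnn x y)

lemma mix_prob {A S : Type*} [Fintype A] [Fintype S] {π : A → ℝ} {P : A → S → ℝ}
    (hπ : IsProbDist π) (hP : ∀ a, IsProbDist (P a)) :
    IsProbDist (fun s => ∑ a, π a * P a s) := by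
  refine ⟨fun s => Finset.sum_nonneg fun a _ => mul_nonneg (hπ.1 a) ((hP a).1 s), ?_⟩
  rw [Finset.sum_comm]
  calc ∑ a, ∑ s, π a * P a s = ∑ a, π a := by
        refine Finset.sum_congr rfl fun a _ => ?_
        rw [← Finset.mul_sum, (hP a).2, mul_one]
    _ = 1 := hπ.2

/-- Finite-horizon iterates of the discounted Bellman sum. -/
def Jiter {Y : Type*} [Fintype Y] (γ : ℝ) (f : Y → ℝ) (K : Y → Y → ℝ) : ℕ → Y → ℝ
  | 0 => fun _ => 0
  | T + 1 => fun y => f y + γ * ∑ y', K y y' * Jiter γ f K T y'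

/-- Policy transfer bound (Theorem 1). -/
theorem policy_transfer_bound {X Y A : Type*}
    [Fintype X] [Fintype Y] [Fintype A] [Nonempty X] [Nonempty Y] [DecidableEq Y]
    (γ : ℝ) (hγ0 : 0 ≤ γ) (hγ1 : γ < 1)
    (πX : X → A → ℝ) (πY : Y → A → ℝ)
    (hπX : ∀ x, IsProbDist (πX x)) (hπY : ∀ y, IsProbDist (πY y))
    (PX : X → A → X → ℝ) (PY : Y → A → Y → ℝ)
    (hPX : ∀ x a, IsProbDist (PX x a)) (hPY : ∀ y a, IsProbDist (PY y a))
    -- the policy similarity metric with Dist = total variation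
    (dstar : X → Y → ℝ)
    (hfix : ∀ x y, dstar x y =
      tv (πX x) (πY y) +
        γ * W1 dstar (fun x' => ∑ a, πX x a * PX x a x')
          (fun y' => ∑ a, πY y a * PY y a y'))
    -- nearest-neighbour match and the transferred policy π̃(y) = π*_X(x̃_y)
    (xt : Y → X) (hxt : ∀ y x, dstar (xt y) y ≤ dstar x y)
    (y0 : Y)
    -- distribution of the chain Y^t started at y0 and following π̃
    (μ : ℕ → Y → ℝ)
    (hμ0 : μ 0 = fun y => if y = y0 then 1 else 0)
    (hμs : ∀ t y', μ (t + 1) y' =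
      ∑ y'', μ t y'' * ∑ a, πX (xt y'') a * PY y'' a y') :
    ∑' t : ℕ, γ ^ t * ∑ y', μ t y' * tv (πX (xt y')) (πY y') ≤
      (1 + γ) / (1 - γ) * dstar (xt y0) y0 := by
  classical
  have h1γ : (0:ℝ) < 1 - γ := by linarith
  set f : Y → ℝ := fun y => tv (πX (xt y)) (πY y) with hfdef
  set K : Y → Y → ℝ := fun y y' => ∑ a, πX (xt y) a * PY y a y' with hKdef
  set g : Y → ℝ := fun y => dstar (xt y) y with hgdef
  set M : ℝ := 1 / (1 - γ) with hMdef
  set α : ℝ := (1 + γ) / (1 - γ) with hαdef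
  have hMnn : 0 ≤ M := by positivity
  have hαnn : 0 ≤ α := by positivity
  have hf0 : ∀ y, 0 ≤ f y := fun y => tv_nonneg' _ _
  have hf1 : ∀ y, f y ≤ 1 := fun y => tv_le_one' (hπX _) (hπY _)
  have hK0 : ∀ y y', 0 ≤ K y y' :=
    fun y y' => Finset.sum_nonneg fun a _ => mul_nonneg ((hπX _).1 a) ((hPY _ _).1 y')
  have hK1 : ∀ y, ∑ y', K y y' = 1 := fun y => (mix_prob (hπX _) (hPY y)).2
  have hPprob : ∀ x : X, IsProbDist (fun x' => ∑ a, πX x a * PX x a x') :=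
    fun x => mix_prob (hπX x) (hPX x)
  have hQprob : ∀ y : Y, IsProbDist (fun y' => ∑ a, πY y a * PY y a y') :=
    fun y => mix_prob (hπY y) (hPY y)
  -- dstar is nonnegative
  have hd0 : ∀ x y, 0 ≤ dstar x y := by
    obtain ⟨p0, -, hp0⟩ := Finset.exists_min_image Finset.univ
      (fun p : X × Y => dstar p.1 p.2) ⟨(Classical.arbitrary X, Classical.arbitrary Y),
        Finset.mem_univ _⟩
    have hm : ∀ x y, dstar p0.1 p0.2 ≤ dstar x y :=
      fun x y => hp0 (x, y) (Finset.mem_univ _)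
    have hW : dstar p0.1 p0.2 ≤ W1 dstar (fun x' => ∑ a, πX p0.1 a * PX p0.1 a x')
        (fun y' => ∑ a, πY p0.2 a * PY p0.2 a y') := by
      have h := le_W1_of_le (hPprob p0.1) (hQprob p0.2) (fun _ => dstar p0.1 p0.2)
        (fun x y => hm x y)
      calc dstar p0.1 p0.2
          = ∑ y, (∑ a, πY p0.2 a * PY p0.2 a y) * dstar p0.1 p0.2 := by
            rw [← Finset.sum_mul, (hQprob p0.2).2, one_mul]
        _ ≤ _ := h
    have hfx := hfix p0.1 p0.2
    have htv : 0 ≤ tv (πX p0.1) (πY p0.2) := tv_nonneg' _ _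
    have hm0 : 0 ≤ dstar p0.1 p0.2 := by
      nlinarith [mul_le_mul_of_nonneg_left hW hγ0]
    intro x y; exact le_trans hm0 (hm x y)
  have hg0 : ∀ y, 0 ≤ g y := fun y => hd0 _ _
  -- μ is a probability distribution at each time
  have hμprob : ∀ t, (∀ y, 0 ≤ μ t y) ∧ ∑ y, μ t y = 1 := by
    intro t
    induction t with
    | zero =>
      rw [hμ0]
      constructor
      · intro y; dsimp only; split <;> norm_num
      · simp
    | succ t ih =>
      constructor
      · intro y'
        rw [hμs]
        exact Finset.sum_nonneg fun y'' _ => mul_nonneg (ih.1 y'') (hK0 y'' y')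
      · calc ∑ y', μ (t+1) y' = ∑ y', ∑ y'', μ t y'' * K y'' y' :=
              Finset.sum_congr rfl fun y' _ => hμs t y'
          _ = ∑ y'', μ t y'' * ∑ y', K y'' y' := by
              rw [Finset.sum_comm]
              exact Finset.sum_congr rfl fun y'' _ => by rw [Finset.mul_sum]
          _ = 1 := by simp only [hK1, mul_one]; exact ih.2
  -- bounds on Jiter
  have hJ0 : ∀ T y, 0 ≤ Jiter γ f K T y := by
    intro T
    induction T with
    | zero => intro y; simp [Jiter]
    | succ T ih =>
      intro y
      have hs : 0 ≤ ∑ y', K y y' * Jiter γ f K T y' :=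
        Finset.sum_nonneg fun y' _ => mul_nonneg (hK0 y y') (ih y')
      have := hf0 y
      simp only [Jiter]
      nlinarith
  have hJM : ∀ T y, Jiter γ f K T y ≤ M := by
    intro T
    induction T with
    | zero => intro y; simpa [Jiter] using hMnn
    | succ T ih =>
      intro y
      have hs : ∑ y', K y y' * Jiter γ f K T y' ≤ M := by
        calc ∑ y', K y y' * Jiter γ f K T y' ≤ ∑ y', K y y' * M :=
              Finset.sum_le_sum fun y' _ => mul_le_mul_of_nonneg_left (ih y') (hK0 y y')
          _ = M := by rw [← Finset.sum_mul, hK1, one_mul]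
      have h1 := hf1 y
      have hMeq : 1 + γ * M = M := by
        rw [hMdef]; field_simp; ring
      simp only [Jiter]
      calc f y + γ * ∑ y', K y y' * Jiter γ f K T y' ≤ 1 + γ * M := by
            have := mul_le_mul_of_nonneg_left hs hγ0
            linarith
        _ = M := hMeq
  have hb : 1 + γ * M ≤ α := by
    rw [hMdef, hαdef, le_div_iff₀ h1γ]
    have : (1 + γ * (1 / (1 - γ))) * (1 - γ) = 1 := by field_simp; ring
    linarith
  -- the key contraction-style bound
  have hJα : ∀ T y, Jiter γ f K T y ≤ α * g y := by
    intro T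
    induction T with
    | zero =>
      intro y
      simp only [Jiter]
      exact mul_nonneg hαnn (hg0 y)
    | succ T ih =>
      intro y
      have hH0 : ∀ a, 0 ≤ ∑ y', PY y a y' * Jiter γ f K T y' :=
        fun a => Finset.sum_nonneg fun y' _ => mul_nonneg ((hPY y a).1 y') (hJ0 T y')
      have hHM : ∀ a, ∑ y', PY y a y' * Jiter γ f K T y' ≤ M := by
        intro a
        calc ∑ y', PY y a y' * Jiter γ f K T y' ≤ ∑ y', PY y a y' * M :=
              Finset.sum_le_sum fun y' _ =>
                mul_le_mul_of_nonneg_left (hJM T y') ((hPY y a).1 y')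
          _ = M := by rw [← Finset.sum_mul, (hPY y a).2, one_mul]
      have hswap : ∀ π : A → ℝ, ∑ y', (∑ a, π a * PY y a y') * Jiter γ f K T y'
          = ∑ a, π a * ∑ y', PY y a y' * Jiter γ f K T y' := by
        intro π
        calc ∑ y', (∑ a, π a * PY y a y') * Jiter γ f K T y'
            = ∑ y', ∑ a, π a * (PY y a y' * Jiter γ f K T y') := by
              refine Finset.sum_congr rfl fun y' _ => ?_
              rw [Finset.sum_mul]
              exact Finset.sum_congr rfl fun a _ => by ring
          _ = ∑ a, ∑ y', π a * (PY y a y' * Jiter γ f K T y') := Finset.sum_comm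
          _ = ∑ a, π a * ∑ y', PY y a y' * Jiter γ f K T y' := by
              refine Finset.sum_congr rfl fun a _ => by rw [Finset.mul_sum]
      -- difference of the two action-mixtures
      have hdiff : ∑ a, πX (xt y) a * (∑ y', PY y a y' * Jiter γ f K T y')
          - ∑ a, πY y a * (∑ y', PY y a y' * Jiter γ f K T y') ≤ f y * M := by
        have e : ∑ a, πX (xt y) a * (∑ y', PY y a y' * Jiter γ f K T y')
            - ∑ a, πY y a * (∑ y', PY y a y' * Jiter γ f K T y')
            = ∑ a, ((πX (xt y) a - πY y a) * ((∑ y', PY y a y' * Jiter γ f K T y') - M/2))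
              + M/2 * ((∑ a, πX (xt y) a) - ∑ a, πY y a) := by
          rw [← Finset.sum_sub_distrib, ← Finset.sum_sub_distrib, Finset.mul_sum,
            ← Finset.sum_add_distrib]
          exact Finset.sum_congr rfl fun a _ => by ring
        rw [e, (hπX _).2, (hπY _).2, sub_self, mul_zero, add_zero]
        calc ∑ a, ((πX (xt y) a - πY y a) * ((∑ y', PY y a y' * Jiter γ f K T y') - M/2))
            ≤ ∑ a, |πX (xt y) a - πY y a| * (M/2) := by
              refine Finset.sum_le_sum fun a _ => ?_
              have h1 : |(∑ y', PY y a y' * Jiter γ f K T y') - M/2| ≤ M/2 :=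
                abs_le.mpr ⟨by linarith [hH0 a], by linarith [hHM a]⟩
              calc (πX (xt y) a - πY y a) * ((∑ y', PY y a y' * Jiter γ f K T y') - M/2)
                  ≤ |(πX (xt y) a - πY y a) * ((∑ y', PY y a y' * Jiter γ f K T y') - M/2)| :=
                    le_abs_self _
                _ = |πX (xt y) a - πY y a| * |(∑ y', PY y a y' * Jiter γ f K T y') - M/2| :=
                    abs_mul _ _
                _ ≤ |πX (xt y) a - πY y a| * (M/2) :=
                    mul_le_mul_of_nonneg_left h1 (abs_nonneg _)
          _ = f y * M := by
              rw [← Finset.sum_mul, hfdef]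
              unfold tv
              ring
      -- Wasserstein bound for the matched part
      have hQg : ∑ y', (∑ a, πY y a * PY y a y') * g y'
          ≤ W1 dstar (fun x' => ∑ a, πX (xt y) a * PX (xt y) a x')
            (fun y' => ∑ a, πY y a * PY y a y') :=
        le_W1_of_le (hPprob (xt y)) (hQprob y) g (fun x' y' => hxt y' x')
      have hQJ : ∑ a, πY y a * (∑ y', PY y a y' * Jiter γ f K T y')
          ≤ α * W1 dstar (fun x' => ∑ a, πX (xt y) a * PX (xt y) a x')
            (fun y' => ∑ a, πY y a * PY y a y') := by
        calc ∑ a, πY y a * (∑ y', PY y a y' * Jiter γ f K T y')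
            = ∑ y', (∑ a, πY y a * PY y a y') * Jiter γ f K T y' := (hswap (πY y)).symm
          _ ≤ ∑ y', (∑ a, πY y a * PY y a y') * (α * g y') :=
              Finset.sum_le_sum fun y' _ =>
                mul_le_mul_of_nonneg_left (ih y') ((hQprob y).1 y')
          _ = α * ∑ y', (∑ a, πY y a * PY y a y') * g y' := by
              rw [Finset.mul_sum]
              exact Finset.sum_congr rfl fun y' _ => by ring
          _ ≤ α * _ := mul_le_mul_of_nonneg_left hQg hαnn
      have hfixy : g y = f y + γ * W1 dstar
          (fun x' => ∑ a, πX (xt y) a * PX (xt y) a x')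
          (fun y' => ∑ a, πY y a * PY y a y') := hfix (xt y) y
      set W := W1 dstar (fun x' => ∑ a, πX (xt y) a * PX (xt y) a x')
        (fun y' => ∑ a, πY y a * PY y a y') with hWdef
      calc Jiter γ f K (T+1) y
          = f y + γ * ∑ y', K y y' * Jiter γ f K T y' := rfl
        _ = f y + γ * ∑ a, πX (xt y) a * (∑ y', PY y a y' * Jiter γ f K T y') := by
            rw [hKdef]; rw [hswap (πX (xt y))]
        _ ≤ f y + γ * (α * W + f y * M) := by
            have := mul_le_mul_of_nonneg_left (by linarith [hdiff, hQJ] :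
              ∑ a, πX (xt y) a * (∑ y', PY y a y' * Jiter γ f K T y') ≤ α * W + f y * M) hγ0
            linarith
        _ = f y * (1 + γ * M) + α * (γ * W) := by ring
        _ ≤ f y * α + α * (γ * W) := by
            have := mul_le_mul_of_nonneg_left hb (hf0 y)
            linarith
        _ = α * (f y + γ * W) := by ring
        _ = α * g y := by rw [← hfixy]
  -- partial sums equal Jiter at y0
  have traj : ∀ T s, ∑ t ∈ Finset.range T, γ ^ t * ∑ y', μ (s + t) y' * f y'
      = ∑ y', μ s y' * Jiter γ f K T y' := by
    intro T
    induction T with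
    | zero => intro s; simp [Jiter]
    | succ T ih =>
      intro s
      rw [Finset.sum_range_succ']
      have e1 : ∑ t ∈ Finset.range T, γ ^ (t+1) * ∑ y', μ (s + (t+1)) y' * f y'
          = γ * ∑ y', μ (s+1) y' * Jiter γ f K T y' := by
        rw [← ih (s+1), Finset.mul_sum]
        refine Finset.sum_congr rfl fun t _ => ?_
        have harith : s + (t+1) = (s+1) + t := by omega
        rw [harith, pow_succ]
        ring
      rw [e1]
      have e2 : ∑ y', μ (s+1) y' * Jiter γ f K T y'
          = ∑ y'', μ s y'' * ∑ y', K y'' y' * Jiter γ f K T y' := by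
        calc ∑ y', μ (s+1) y' * Jiter γ f K T y'
            = ∑ y', (∑ y'', μ s y'' * K y'' y') * Jiter γ f K T y' :=
              Finset.sum_congr rfl fun y' _ => by rw [hμs]
          _ = ∑ y', ∑ y'', μ s y'' * (K y'' y' * Jiter γ f K T y') := by
              refine Finset.sum_congr rfl fun y' _ => ?_
              rw [Finset.sum_mul]
              exact Finset.sum_congr rfl fun y'' _ => by ring
          _ = ∑ y'', ∑ y', μ s y'' * (K y'' y' * Jiter γ f K T y') := Finset.sum_comm
          _ = ∑ y'', μ s y'' * ∑ y', K y'' y' * Jiter γ f K T y' := by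
              refine Finset.sum_congr rfl fun y'' _ => by rw [Finset.mul_sum]
      rw [e2]
      simp only [pow_zero, one_mul, Nat.add_zero]
      have e3 : ∑ y'', μ s y'' * Jiter γ f K (T+1) y''
          = ∑ y'', (μ s y'' * f y'' + γ * (μ s y'' * ∑ y', K y'' y' * Jiter γ f K T y')) := by
        refine Finset.sum_congr rfl fun y'' _ => ?_
        show μ s y'' * (f y'' + γ * ∑ y', K y'' y' * Jiter γ f K T y') = _
        ring
      rw [e3, Finset.sum_add_distrib, ← Finset.mul_sum]
      ring
  have hpartial : ∀ T, ∑ t ∈ Finset.range T, γ ^ t * ∑ y', μ t y' * f y'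
      ≤ α * g y0 := by
    intro T
    have h := traj T 0
    simp only [Nat.zero_add] at h
    rw [h, hμ0]
    have : ∑ y', (if y' = y0 then (1:ℝ) else 0) * Jiter γ f K T y' = Jiter γ f K T y0 := by
      simp [ite_mul]
    rw [this]
    exact hJα T y0
  -- summability and passing to the limit
  have hterm0 : ∀ t, 0 ≤ γ ^ t * ∑ y', μ t y' * f y' := by
    intro t
    exact mul_nonneg (pow_nonneg hγ0 t)
      (Finset.sum_nonneg fun y' _ => mul_nonneg ((hμprob t).1 y') (hf0 y'))
  have hterm1 : ∀ t, γ ^ t * ∑ y', μ t y' * f y' ≤ γ ^ t := by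
    intro t
    have : ∑ y', μ t y' * f y' ≤ 1 := by
      calc ∑ y', μ t y' * f y' ≤ ∑ y', μ t y' * 1 :=
            Finset.sum_le_sum fun y' _ =>
              mul_le_mul_of_nonneg_left (hf1 y') ((hμprob t).1 y')
        _ = 1 := by simpa using (hμprob t).2
    calc γ ^ t * ∑ y', μ t y' * f y' ≤ γ ^ t * 1 :=
          mul_le_mul_of_nonneg_left this (pow_nonneg hγ0 t)
      _ = γ ^ t := mul_one _
  have hsummable : Summable (fun t : ℕ => γ ^ t * ∑ y', μ t y' * f y') :=
    Summable.of_nonneg_of_le hterm0 hterm1 (summable_geometric_of_lt_one hγ0 hγ1)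
  exact Summable.tsum_le_of_sum_range_le hsummable hpartial
end
end
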